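/- For X, Y ∈ ℝ^{d×r} with XᵀX and YᵀY invertible, and any V ∈ ℝ^{d×r} with 2‖Y−X‖_X* < 1, the local dual norms satisfy (‖V‖_X*)²/(1 + 2‖Y−X‖_X* + (‖Y−X‖_X*)²) ≤ (‖V‖_Y*)² ≤ (‖V‖_X*)²/(1 − 2‖Y−X‖_X*). -/

import Mathlib

open Matrix BigOperators

noncomputable section

/-- Frobenius norm of a real matrix. -/
def frob {m n : ℕ} (A : Matrix (Fin m) (Fin n) ℝ) : ℝ :=
  Real.sqrt (∑ i, ∑ j, (A i j) ^ 2)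

/-- Trace inner product `⟨A,B⟩ = tr(AᵀB)`. -/
def mip {m n : ℕ} (A B : Matrix (Fin m) (Fin n) ℝ) : ℝ := (Aᵀ * B).trace

open Classical in
/-- Smallest eigenvalue of a Hermitian matrix (junk value 0 otherwise). -/
def lammin {n : ℕ} (M : Matrix (Fin n) (Fin n) ℝ) : ℝ :=
  if h : M.IsHermitian then ⨅ i, h.eigenvalues i else 0

/-- The square root of a positive semidefinite matrix, as `Matrix.PosSemidef.sqrt` was defined
in the older Mathlib (that declaration has since been removed). -/
def psdSqrt {n : ℕ} {A : Matrix (Fin n) (Fin n) ℝ} (hA : A.PosSemidef) : Matrix (Fin n) (Fin n) ℝ :=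
  hA.1.eigenvectorUnitary.1 * diagonal ((↑) ∘ (√·) ∘ hA.1.eigenvalues) *
    (star hA.1.eigenvectorUnitary : Matrix (Fin n) (Fin n) ℝ)

/-- Local norm `‖V‖_X = ‖V (XᵀX)^{1/2}‖_F`. -/
def locNorm {d r : ℕ} (X V : Matrix (Fin d) (Fin r) ℝ) : ℝ :=
  frob (V * psdSqrt (Matrix.posSemidef_conjTranspose_mul_self X))

/-- Dual local norm `‖V‖_X* = ‖V (XᵀX)^{-1/2}‖_F`. -/
def dualNorm {d r : ℕ} (X V : Matrix (Fin d) (Fin r) ℝ) : ℝ :=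
  frob (V * (psdSqrt (Matrix.posSemidef_conjTranspose_mul_self X))⁻¹)

/-- Leverage score / coherence `g_k(X) = e_kᵀ X (XᵀX)⁻¹ Xᵀ e_k`. -/
def lev {d r : ℕ} (k : Fin d) (X : Matrix (Fin d) (Fin r) ℝ) : ℝ :=
  (X * (Xᴴ * X)⁻¹ * Xᴴ) k k

/-- Gradient of the leverage score `∇g_k(X)`. -/
def levGrad {d r : ℕ} (k : Fin d) (X : Matrix (Fin d) (Fin r) ℝ) :
    Matrix (Fin d) (Fin r) ℝ :=
  (2 : ℝ) • ((1 - X * (Xᴴ * X)⁻¹ * Xᴴ) * Matrix.single k k (1 : ℝ) * X * (Xᴴ * X)⁻¹)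

/-- Stochastic gradient sample `SG(X)` for the index pair `(i,j)`. -/
def SG {d r : ℕ} (X Z : Matrix (Fin d) (Fin r) ℝ) (i j : Fin d) :
    Matrix (Fin d) (Fin r) ℝ :=
  (2 * (d : ℝ) ^ 2 * ((X * Xᴴ - Z * Zᴴ) i j)) •
    ((Matrix.single i j (1 : ℝ) + Matrix.single j i (1 : ℝ)) * X)

/-!
Put `E = Y - X` and `ε = ‖E‖_X*`. The Cauchy–Schwarz inequality `(a w)² ≤ (a P⁻¹ aᵀ) (wᵀ P w)`
for `P = XᵀX`, applied to the rows `a` of `E`, gives `‖E w‖ ≤ ε ‖X w‖`; hence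
`(1 - 2ε) XᵀX ≤ YᵀY ≤ (1 + ε)² XᵀX` in the Loewner order. Inversion reverses the Loewner order,
and `‖V‖_X*² = ∑ᵢ Vᵢ (XᵀX)⁻¹ Vᵢᵀ` is monotone in `(XᵀX)⁻¹`.
-/

section QuadraticForm

variable {ι : Type*} [Fintype ι]

lemma dotProduct_sq_le (a v : ι → ℝ) : (a ⬝ᵥ v) ^ 2 ≤ (a ⬝ᵥ a) * (v ⬝ᵥ v) := by
  simpa only [dotProduct, sq] using Finset.sum_mul_sq_le_sq_mul_sq Finset.univ a v

lemma dotProduct_add_self_mem_Icc {x e : ι → ℝ} {ε : ℝ} (hε : 0 ≤ ε)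
    (he : e ⬝ᵥ e ≤ ε ^ 2 * (x ⬝ᵥ x)) :
    (x + e) ⬝ᵥ (x + e) ∈ Set.Icc ((1 - 2 * ε) * (x ⬝ᵥ x)) ((1 + ε) ^ 2 * (x ⬝ᵥ x)) := by
  have hx : 0 ≤ x ⬝ᵥ x := by simpa using dotProduct_star_self_nonneg x
  have he₀ : 0 ≤ e ⬝ᵥ e := by simpa using dotProduct_star_self_nonneg e
  have hcross : -(ε * (x ⬝ᵥ x)) ≤ x ⬝ᵥ e ∧ x ⬝ᵥ e ≤ ε * (x ⬝ᵥ x) :=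
    abs_le_of_sq_le_sq' (by nlinarith [dotProduct_sq_le x e]) (by positivity)
  simp only [Set.mem_Icc, add_dotProduct, dotProduct_add, dotProduct_comm e x]
  constructor <;> nlinarith

lemma Matrix.IsHermitian.dotProduct_mulVec_comm {P : Matrix ι ι ℝ} (hP : P.IsHermitian)
    (v w : ι → ℝ) : v ⬝ᵥ (P *ᵥ w) = w ⬝ᵥ (P *ᵥ v) := by
  rw [dotProduct_mulVec, ← mulVec_transpose, ← conjTranspose_eq_transpose_of_trivial, hP,
    dotProduct_comm]

lemma dotProduct_conjTranspose_mul_self_mulVec {κ : Type*} [Fintype κ] (X : Matrix κ ι ℝ)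
    (w : ι → ℝ) : w ⬝ᵥ ((Xᴴ * X) *ᵥ w) = (X *ᵥ w) ⬝ᵥ (X *ᵥ w) := by
  rw [← mulVec_mulVec, conjTranspose_eq_transpose_of_trivial, mulVec_transpose,
    dotProduct_mulVec, dotProduct_comm]

variable [DecidableEq ι] {P : Matrix ι ι ℝ}

/-- The quadratic form of `P⁻¹` is the convex conjugate of that of `P`. -/
lemma Matrix.PosSemidef.two_mul_dotProduct_sub_le (hP : P.PosSemidef) (hPdet : IsUnit P.det)
    (v w : ι → ℝ) : 2 * (w ⬝ᵥ v) - w ⬝ᵥ (P *ᵥ w) ≤ v ⬝ᵥ (P⁻¹ *ᵥ v) := by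
  set z := P⁻¹ *ᵥ v
  have hz : P *ᵥ z = v := by rw [mulVec_mulVec, mul_nonsing_inv _ hPdet, one_mulVec]
  have hsq : 0 ≤ (w - z) ⬝ᵥ (P *ᵥ (w - z)) := by
    simpa using hP.dotProduct_mulVec_nonneg (w - z)
  have hsymm := hP.isHermitian.dotProduct_mulVec_comm z w
  simp only [mulVec_sub, dotProduct_sub, sub_dotProduct, hz] at hsq hsymm
  rw [dotProduct_comm v z]
  linarith

lemma Matrix.PosSemidef.dotProduct_sq_le (hP : P.PosSemidef) (hPdet : IsUnit P.det)
    (a v : ι → ℝ) : (a ⬝ᵥ v) ^ 2 ≤ (a ⬝ᵥ (P⁻¹ *ᵥ a)) * (v ⬝ᵥ (P *ᵥ v)) := by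
  have hdiscr := discrim_le_zero (a := v ⬝ᵥ (P *ᵥ v)) (b := -2 * (a ⬝ᵥ v))
    (c := a ⬝ᵥ (P⁻¹ *ᵥ a)) fun t => by
      have := hP.two_mul_dotProduct_sub_le hPdet a (t • v)
      simp only [mulVec_smul, smul_dotProduct, dotProduct_smul, smul_eq_mul,
        dotProduct_comm v a] at this
      linarith
  rw [discrim] at hdiscr
  linarith

lemma Matrix.PosSemidef.mul_dotProduct_inv_mulVec_le {Q : Matrix ι ι ℝ} (hP : P.PosSemidef)
    (hPdet : IsUnit P.det) (hQdet : IsUnit Q.det) {c : ℝ} (hc : 0 ≤ c)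
    (hPQ : ∀ w, c * (w ⬝ᵥ (P *ᵥ w)) ≤ w ⬝ᵥ (Q *ᵥ w)) (v : ι → ℝ) :
    c * (v ⬝ᵥ (Q⁻¹ *ᵥ v)) ≤ v ⬝ᵥ (P⁻¹ *ᵥ v) := by
  set u := Q⁻¹ *ᵥ v
  have hu : Q *ᵥ u = v := by rw [mulVec_mulVec, mul_nonsing_inv _ hQdet, one_mulVec]
  have hvar := hP.two_mul_dotProduct_sub_le hPdet v (c • u)
  have hdom := hPQ u
  simp only [mulVec_smul, smul_dotProduct, dotProduct_smul, smul_eq_mul, hu] at hvar hdom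
  rw [dotProduct_comm v u]
  nlinarith [mul_le_mul_of_nonneg_left hdom hc]

end QuadraticForm

lemma frob_sq {m n : ℕ} (A : Matrix (Fin m) (Fin n) ℝ) : frob A ^ 2 = ∑ i, A i ⬝ᵥ A i := by
  rw [frob, Real.sq_sqrt (by positivity)]
  simp only [dotProduct, sq]

lemma vecMul_dotProduct_vecMul {ι κ : Type*} [Fintype ι] [Fintype κ] (a : ι → ℝ)
    (B : Matrix ι κ ℝ) : (a ᵥ* B) ⬝ᵥ (a ᵥ* B) = a ⬝ᵥ ((B * Bᵀ) *ᵥ a) := by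
  rw [← mulVec_mulVec, mulVec_transpose, dotProduct_mulVec]

lemma frob_mul_sq {m n k : ℕ} (V : Matrix (Fin m) (Fin n) ℝ) (B : Matrix (Fin n) (Fin k) ℝ) :
    frob (V * B) ^ 2 = ∑ i, V i ⬝ᵥ ((B * Bᵀ) *ᵥ V i) := by
  simp only [frob_sq, ← vecMul_dotProduct_vecMul]
  rfl

lemma psdSqrt_isHermitian {n : ℕ} {M : Matrix (Fin n) (Fin n) ℝ} (hM : M.PosSemidef) :
    (psdSqrt hM).IsHermitian := by
  simp [psdSqrt, IsHermitian, Matrix.mul_assoc, star_eq_conjTranspose]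

lemma psdSqrt_mul_self {n : ℕ} {M : Matrix (Fin n) (Fin n) ℝ} (hM : M.PosSemidef) :
    psdSqrt hM * psdSqrt hM = M := by
  have hU : (star hM.1.eigenvectorUnitary : Matrix (Fin n) (Fin n) ℝ) *
      hM.1.eigenvectorUnitary.1 = 1 := Unitary.coe_star_mul_self _
  have hspec := hM.1.spectral_theorem
  rw [Unitary.conjStarAlgAut_apply] at hspec
  conv_rhs => rw [hspec]
  simp only [psdSqrt, Matrix.mul_assoc]
  rw [← Matrix.mul_assoc (star _), hU, Matrix.one_mul, ← Matrix.mul_assoc (diagonal _),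
    diagonal_mul_diagonal]
  congr 3
  funext i
  simp [Real.mul_self_sqrt (hM.eigenvalues_nonneg i)]

section DualNorm

variable {d r : ℕ} {X Y : Matrix (Fin d) (Fin r) ℝ}

lemma dualNorm_sq (X V : Matrix (Fin d) (Fin r) ℝ) :
    dualNorm X V ^ 2 = ∑ i, V i ⬝ᵥ ((Xᴴ * X)⁻¹ *ᵥ V i) := by
  rw [dualNorm]
  set A := psdSqrt (posSemidef_conjTranspose_mul_self X)
  have hAA : A * A = Xᴴ * X := psdSqrt_mul_self _
  have hAT : Aᵀ = A := by
    rw [← conjTranspose_eq_transpose_of_trivial]; exact psdSqrt_isHermitian _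
  rw [frob_mul_sq, transpose_nonsing_inv, hAT, ← Matrix.mul_inv_rev, hAA]

lemma dotProduct_mulVec_self_le_dualNorm_sq (hX : IsUnit (Xᴴ * X).det)
    (E : Matrix (Fin d) (Fin r) ℝ) (w : Fin r → ℝ) :
    (E *ᵥ w) ⬝ᵥ (E *ᵥ w) ≤ dualNorm X E ^ 2 * ((X *ᵥ w) ⬝ᵥ (X *ᵥ w)) := by
  rw [dotProduct, dualNorm_sq, Finset.sum_mul, ← dotProduct_conjTranspose_mul_self_mulVec]
  refine Finset.sum_le_sum fun i _ => ?_
  simpa only [sq, mulVec] using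
    (posSemidef_conjTranspose_mul_self X).dotProduct_sq_le hX (E i) w

lemma dotProduct_conjTranspose_mul_self_mulVec_mem_Icc (hX : IsUnit (Xᴴ * X).det)
    (w : Fin r → ℝ) :
    w ⬝ᵥ ((Yᴴ * Y) *ᵥ w) ∈ Set.Icc ((1 - 2 * dualNorm X (Y - X)) * (w ⬝ᵥ ((Xᴴ * X) *ᵥ w)))
      ((1 + dualNorm X (Y - X)) ^ 2 * (w ⬝ᵥ ((Xᴴ * X) *ᵥ w))) := by
  have hY : Y *ᵥ w = X *ᵥ w + (Y - X) *ᵥ w := by rw [← add_mulVec, add_sub_cancel]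
  simp only [dotProduct_conjTranspose_mul_self_mulVec, hY]
  exact dotProduct_add_self_mem_Icc (Real.sqrt_nonneg _)
    (dotProduct_mulVec_self_le_dualNorm_sq hX _ w)

lemma mul_dualNorm_sq_le (hX : IsUnit (Xᴴ * X).det) (hY : IsUnit (Yᴴ * Y).det) {c : ℝ}
    (hc : 0 ≤ c) (hXY : ∀ w, c * (w ⬝ᵥ ((Xᴴ * X) *ᵥ w)) ≤ w ⬝ᵥ ((Yᴴ * Y) *ᵥ w))
    (V : Matrix (Fin d) (Fin r) ℝ) : c * dualNorm Y V ^ 2 ≤ dualNorm X V ^ 2 := by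
  rw [dualNorm_sq, dualNorm_sq, Finset.mul_sum]
  exact Finset.sum_le_sum fun i _ =>
    (posSemidef_conjTranspose_mul_self X).mul_dotProduct_inv_mulVec_le hX hY hc hXY (V i)

end DualNorm

/-- Change-of-basepoint lemma for the dual local norm. -/
theorem change_of_norm {d r : ℕ} (X Y V : Matrix (Fin d) (Fin r) ℝ)
    (hX : IsUnit (Xᴴ * X).det) (hY : IsUnit (Yᴴ * Y).det)
    (h : 2 * dualNorm X (Y - X) < 1) :
    dualNorm X V ^ 2 / (1 + 2 * dualNorm X (Y - X) + dualNorm X (Y - X) ^ 2)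
        ≤ dualNorm Y V ^ 2
      ∧ dualNorm Y V ^ 2 ≤ dualNorm X V ^ 2 / (1 - 2 * dualNorm X (Y - X)) := by
  set ε := dualNorm X (Y - X)
  have hε : 0 ≤ ε := Real.sqrt_nonneg _
  have hgram := dotProduct_conjTranspose_mul_self_mulVec_mem_Icc (Y := Y) hX
  constructor
  · have hYX := mul_dualNorm_sq_le hY hX (c := ((1 + ε) ^ 2)⁻¹) (by positivity)
      (fun w => (inv_mul_le_iff₀ (by positivity)).mpr (hgram w).2) V
    convert hYX using 1
    ring
  · have hXY := mul_dualNorm_sq_le hX hY (by linarith) (fun w => (hgram w).1) V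
    rw [le_div_iff₀ (by linarith)]
    linarith
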